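/- arXiv:2303.07134 — 4 statements merged into one kernel-verified Lean document; each statement's English description precedes it below -/
import Mathlib

section
/- Let A be an abelian category with enough projectives in which every object X admits a short exact sequence 0 → P₁ → P₀ → X → 0 with P₀, P₁ projective, and in which every projective object P admits a monomorphism P ↪ Q with Q both projective and injective. Then: (1) A has enough injectives; (2) every object X admits a short exact sequence 0 → X → I⁰ → I¹ → 0 with I⁰, I¹ injective; (3) every injective object I admits an epimorphism Q ↠ I with Q both projective and injective. -/
open CategoryTheory CategoryTheory.Abelian CategoryTheory.Limits

attribute [local instance] Pseudoelement.objectToSort Pseudoelement.homToFun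

universe w v u

/-- Any object admitting a retraction-style splitting for every mono out of it is injective. -/
theorem injective_of_mono_splits {C : Type u} [Category.{v} C] [Abelian C] {J : C}
    (h : ∀ (Y : C) (v : J ⟶ Y), Mono v → ∃ r : Y ⟶ J, v ≫ r = 𝟙 J) : Injective J := by
  constructor
  intro A B g f hf
  obtain ⟨r, hr⟩ := h (pushout g f) (pushout.inl g f) (Abelian.mono_pushout_of_mono_g g f)
  exact ⟨pushout.inr g f ≫ r, by rw [← Category.assoc, ← pushout.condition,
    Category.assoc, hr, Category.comp_id]⟩

/-- If global dimension is ≤ 1 (in the `hres` sense), then a quotient of an injective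
object is injective. -/
theorem injective_of_epi_from_injective {C : Type u} [Category.{v} C] [Abelian C]
    (hres : ∀ X : C, ∃ (P₁ P₀ : C) (f : P₁ ⟶ P₀) (g : P₀ ⟶ X) (w0 : f ≫ g = 0),
      Projective P₀ ∧ Projective P₁ ∧ (ShortComplex.mk f g w0).ShortExact)
    {Q J : C} (π : Q ⟶ J) (hπ : Epi π) (hQ : Injective Q) : Injective J := by
  apply injective_of_mono_splits
  intro Y v hv
  let q : Y ⟶ cokernel v := cokernel.π v
  obtain ⟨R₁, R₀, a, b, w, hR₀, hR₁, hSE⟩ := hres (cokernel v)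
  have hamono : Mono a := hSE.mono_f
  have hbepi : Epi b := hSE.epi_g
  -- lift b along the epi q
  have hqepi : Epi q := coequalizer.π_epi
  let β : R₀ ⟶ Y := Projective.factorThru b q
  have hβ : β ≫ q = b := Projective.factorThru_comp b q
  -- a ≫ β factors through v (= kernel of q)
  have hab : (a ≫ β) ≫ q = 0 := by rw [Category.assoc, hβ, w]
  let γ : R₁ ⟶ J := Abelian.monoLift v (a ≫ β) hab
  have hγ : γ ≫ v = a ≫ β := Abelian.monoLift_comp v (a ≫ β) hab
  -- lift γ along π (R₁ projective)
  let δ : R₁ ⟶ Q := Projective.factorThru γ π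
  have hδ : δ ≫ π = γ := Projective.factorThru_comp γ π
  -- extend δ along the mono a (Q injective)
  obtain ⟨θ, hθ⟩ := hQ.factors δ a
  -- now β - (θ ≫ π) ≫ v is killed by a, so it factors through b (= cokernel of a)
  have hkill : a ≫ (β - (θ ≫ π) ≫ v) = 0 := by
    rw [Preadditive.comp_sub, ← Category.assoc, ← Category.assoc, hθ, hδ, hγ, sub_self]
  let s : cokernel v ⟶ Y :=
    Cofork.IsColimit.desc hSE.gIsCokernel (β - (θ ≫ π) ≫ v) (by rw [zero_comp]; exact hkill)
  have hs : b ≫ s = β - (θ ≫ π) ≫ v := Cofork.IsColimit.π_desc' hSE.gIsCokernel _ _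
  have hsq : s ≫ q = 𝟙 (cokernel v) := by
    rw [← cancel_epi b, ← Category.assoc, hs, Preadditive.sub_comp, Category.assoc,
      cokernel.condition, comp_zero, sub_zero, hβ, Category.comp_id]
  -- build the retraction of v
  have hfac : (𝟙 Y - q ≫ s) ≫ q = 0 := by
    rw [Preadditive.sub_comp, Category.id_comp, Category.assoc, hsq, Category.comp_id, sub_self]
  let r : Y ⟶ J := Abelian.monoLift v (𝟙 Y - q ≫ s) hfac
  have hr : r ≫ v = 𝟙 Y - q ≫ s := Abelian.monoLift_comp v _ hfac
  refine ⟨r, ?_⟩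
  have : v ≫ r ≫ v = 𝟙 J ≫ v := by
    rw [hr, Preadditive.comp_sub, Category.comp_id, Category.id_comp, ← Category.assoc,
      cokernel.condition, zero_comp, sub_zero]
  rwa [← Category.assoc, cancel_mono v] at this

/-- If an abelian category has enough projectives, every object admits a
length-1 projective resolution, and every projective embeds into a projective-injective
object, then it has enough injectives, every object admits a length-1 injective
coresolution, and every injective is a quotient of a projective-injective object. -/
theorem zero_auslander_self_dual
    {C : Type u} [Category.{v} C] [Abelian C] [EnoughProjectives C]
    (hres : ∀ X : C, ∃ (P₁ P₀ : C) (f : P₁ ⟶ P₀) (g : P₀ ⟶ X) (w0 : f ≫ g = 0),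
      Projective P₀ ∧ Projective P₁ ∧ (ShortComplex.mk f g w0).ShortExact)
    (hdom : ∀ P : C, Projective P →
      ∃ (Q : C) (i : P ⟶ Q), Mono i ∧ Projective Q ∧ Injective Q) :
    EnoughInjectives C ∧
    (∀ X : C, ∃ (I0 I1 : C) (a : X ⟶ I0) (b : I0 ⟶ I1) (w1 : a ≫ b = 0),
      Injective I0 ∧ Injective I1 ∧ (ShortComplex.mk a b w1).ShortExact) ∧
    (∀ I : C, Injective I →
      ∃ (Q : C) (p : Q ⟶ I), Epi p ∧ Projective Q ∧ Injective Q) := by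
  have main : ∀ X : C, ∃ (I0 I1 : C) (a : X ⟶ I0) (b : I0 ⟶ I1) (w1 : a ≫ b = 0),
      Injective I0 ∧ Injective I1 ∧ (ShortComplex.mk a b w1).ShortExact := by
    intro X
    obtain ⟨P₁, P₀, f, g, w, hP₀, hP₁, hSE⟩ := hres X
    obtain ⟨Q, j, hj, hQproj, hQinj⟩ := hdom P₀ hP₀
    have hfmono : Mono f := hSE.mono_f
    have hgepi : Epi g := hSE.epi_g
    let u : P₁ ⟶ Q := f ≫ j
    have humono : Mono u := mono_comp f j
    let π : Q ⟶ cokernel u := cokernel.π u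
    have hπepi : Epi π := coequalizer.π_epi
    have hI0 : Injective (cokernel u) :=
      injective_of_epi_from_injective hres π hπepi hQinj
    -- the map a : X ⟶ cokernel u induced since g is the cokernel of f
    have hjπ : f ≫ (j ≫ π) = 0 := by
      rw [← Category.assoc]; exact cokernel.condition u
    let a : X ⟶ cokernel u := Cofork.IsColimit.desc hSE.gIsCokernel (j ≫ π) (by rw [zero_comp]; exact hjπ)
    have ha : g ≫ a = j ≫ π := Cofork.IsColimit.π_desc' hSE.gIsCokernel _ _
    -- a is a monomorphism: pseudoelement chase
    have hamono : Mono a := by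
      apply Pseudoelement.mono_of_zero_of_map_zero
      intro x hx
      obtain ⟨x₀, hx₀⟩ := Pseudoelement.pseudo_surjective_of_epi g x
      have h1 : π (j x₀) = 0 := by
        rw [← Pseudoelement.comp_apply, ← ha, Pseudoelement.comp_apply, hx₀, hx]
      have h2 : ∃ p, u p = j x₀ := by
        have hcex : (ShortComplex.mk u π (cokernel.condition u)).Exact :=
          ShortComplex.exact_of_g_is_cokernel _ (cokernelIsCokernel u)
        exact Pseudoelement.pseudo_exact_of_exact hcex (j x₀) h1
      obtain ⟨p, hp⟩ := h2
      have h3 : j (f p) = j x₀ := by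
        rw [← Pseudoelement.comp_apply]; exact hp
      have h4 : f p = x₀ := Pseudoelement.pseudo_injective_of_mono j h3
      have hex : ∀ y, g y = 0 → ∃ z, f z = y := Pseudoelement.pseudo_exact_of_exact hSE.exact
      rw [← hx₀, ← h4, ← Pseudoelement.comp_apply, w]
      exact Pseudoelement.zero_apply _ p
    -- second injective cosyzygy
    let b : cokernel u ⟶ cokernel a := cokernel.π a
    have hI1 : Injective (cokernel a) := by
      have : Epi (π ≫ b) := epi_comp π b
      exact injective_of_epi_from_injective hres (π ≫ b) this hQinj
    refine ⟨cokernel u, cokernel a, a, b, cokernel.condition a, hI0, hI1, ?_⟩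
    have hexact : (ShortComplex.mk a b (cokernel.condition a)).Exact :=
      ShortComplex.exact_of_g_is_cokernel _ (cokernelIsCokernel a)
    exact ⟨hexact⟩
  refine ⟨?_, main, ?_⟩
  · constructor
    intro X
    obtain ⟨I0, I1, a, b, w1, hI0, hI1, hSE⟩ := main X
    exact ⟨⟨I0, hI0, a, hSE.mono_f⟩⟩
  · intro I hI
    obtain ⟨Q, i, hi, hQproj, hQinj⟩ := hdom (Projective.over I) inferInstance
    obtain ⟨h, hh⟩ := hI.factors (Projective.π I) i
    have : Epi (i ≫ h) := hh ▸ inferInstance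
    exact ⟨Q, h, epi_of_epi i h, hQproj, hQinj⟩
end

section
/- Let D be a triangulated category with shift Σ and let (A, B) be a co-t-structure on D with coheart S = ΣA ∩ B. Then the extended coheart Σ²A ∩ B equals S ∗ ΣS: an object C belongs to Σ²A ∩ B if and only if there exists a triangle S₀ → C → Σ S₁ → Σ S₀ with S₀, S₁ ∈ S. -/
open CategoryTheory CategoryTheory.Pretriangulated CategoryTheory.Limits

universe v u

/-- For a co-t-structure `(A, B)` with coheart `S = ΣA ∩ B`, the extended
coheart `Σ²A ∩ B` equals `S ∗ ΣS`: an object `C₀` lies in `Σ²A ∩ B` iff there is a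
triangle `S₀ → C₀ → Σ S₁ → Σ S₀` with `S₀, S₁` in the coheart. -/
theorem extended_coheart_eq_coheart_star_shift
    {D : Type u} [Category.{v} D] [HasZeroObject D] [HasShift D ℤ] [Preadditive D]
    [∀ n : ℤ, (shiftFunctor D n).Additive] [Pretriangulated D]
    (A B : Set D)
    (hAsummand : ∀ (X Y : D) (s : X ⟶ Y) (r : Y ⟶ X), s ≫ r = 𝟙 X → Y ∈ A → X ∈ A)
    (hBsummand : ∀ (X Y : D) (s : X ⟶ Y) (r : Y ⟶ X), s ≫ r = 𝟙 X → Y ∈ B → X ∈ B)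
    (horth : ∀ a ∈ A, ∀ b ∈ B, ∀ f : a ⟶ b, f = 0)
    (hdecomp : ∀ X : D, ∃ a ∈ A, ∃ b ∈ B, ∃ (f : a ⟶ X) (g : X ⟶ b) (h : b ⟶ a⟦(1:ℤ)⟧),
      Triangle.mk f g h ∈ distTriang D)
    (hshift : ∀ b ∈ B, b⟦(1:ℤ)⟧ ∈ B) :
    ∀ C₀ : D, (C₀⟦(-2:ℤ)⟧ ∈ A ∧ C₀ ∈ B) ↔
      ∃ S₀ S₁ : D, (S₀⟦(-1:ℤ)⟧ ∈ A ∧ S₀ ∈ B) ∧ (S₁⟦(-1:ℤ)⟧ ∈ A ∧ S₁ ∈ B) ∧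
        ∃ (f : S₀ ⟶ C₀) (g : C₀ ⟶ S₁⟦(1:ℤ)⟧) (h : S₁⟦(1:ℤ)⟧ ⟶ S₀⟦(1:ℤ)⟧),
          Triangle.mk f g h ∈ distTriang D := by
  -- closure under isomorphism
  have hAiso : ∀ {X Y : D}, (X ≅ Y) → Y ∈ A → X ∈ A := fun e hY =>
    hAsummand _ _ e.hom e.inv e.hom_inv_id hY
  have hBiso : ∀ {X Y : D}, (X ≅ Y) → Y ∈ B → X ∈ B := fun e hY =>
    hBsummand _ _ e.hom e.inv e.hom_inv_id hY
  -- B is closed under extensions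
  have hBext : ∀ (T : Triangle D), (T ∈ distTriang D) → T.obj₁ ∈ B → T.obj₃ ∈ B →
      T.obj₂ ∈ B := by
    intro T hT h1 h3
    obtain ⟨a, ha, b, hb, f, g, h, hdt⟩ := hdecomp T.obj₂
    obtain ⟨φ, hφ⟩ := Triangle.coyoneda_exact₂ T hT f (horth a ha T.obj₃ h3 _)
    have hf0 : f = 0 := by rw [hφ, horth a ha T.obj₁ h1 φ, zero_comp]
    obtain ⟨r, hr⟩ := Triangle.yoneda_exact₂ (Triangle.mk f g h) hdt (𝟙 T.obj₂)
      (by rw [show (Triangle.mk f g h).mor₁ = 0 from hf0]; exact zero_comp)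
    exact hBsummand T.obj₂ b g r hr.symm hb
  -- A is closed under extensions
  have hAext : ∀ (T : Triangle D), (T ∈ distTriang D) → T.obj₁ ∈ A → T.obj₃ ∈ A →
      T.obj₂ ∈ A := by
    intro T hT h1 h3
    obtain ⟨a, ha, b, hb, f, g, h, hdt⟩ := hdecomp T.obj₂
    obtain ⟨ψ, hψ⟩ := Triangle.yoneda_exact₂ T hT g (horth T.obj₁ h1 b hb _)
    have hg0 : g = 0 := by rw [hψ, horth T.obj₃ h3 b hb ψ, comp_zero]
    obtain ⟨s, hs⟩ := Triangle.coyoneda_exact₂ (Triangle.mk f g h) hdt (𝟙 T.obj₂)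
      (by rw [show (Triangle.mk f g h).mor₂ = 0 from hg0]; exact comp_zero)
    exact hAsummand T.obj₂ a s f hs.symm ha
  -- A is closed under ⟦-1⟧
  have hAdown : ∀ a ∈ A, a⟦(-1:ℤ)⟧ ∈ A := by
    intro a ha
    obtain ⟨a', ha', b', hb', f, g, h, hdt⟩ := hdecomp (a⟦(-1:ℤ)⟧)
    have hg1 : (shiftFunctor D (1:ℤ)).map g =
        ((shiftFunctorCompIsoId D (-1:ℤ) (1:ℤ) (by norm_num)).app a).hom ≫
          (((shiftFunctorCompIsoId D (-1:ℤ) (1:ℤ) (by norm_num)).app a).inv ≫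
            (shiftFunctor D (1:ℤ)).map g) := by simp
    have hz : (((shiftFunctorCompIsoId D (-1:ℤ) (1:ℤ) (by norm_num)).app a).inv ≫
        (shiftFunctor D (1:ℤ)).map g) = 0 :=
      horth a ha (b'⟦(1:ℤ)⟧) (hshift b' hb') _
    have hg0 : g = 0 := by
      apply (shiftFunctor D (1:ℤ)).map_injective
      rw [hg1, hz, comp_zero, Functor.map_zero]
    obtain ⟨s, hs⟩ := Triangle.coyoneda_exact₂ (Triangle.mk f g h) hdt (𝟙 (a⟦(-1:ℤ)⟧))
      (by rw [show (Triangle.mk f g h).mor₂ = 0 from hg0]; exact comp_zero)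
    exact hAsummand _ a' s f hs.symm ha'
  intro C₀
  constructor
  · rintro ⟨hCA, hCB⟩
    obtain ⟨a, ha, b, hb, f, g, h, hdt⟩ := hdecomp (C₀⟦(-1:ℤ)⟧)
    set e : (C₀⟦(-1:ℤ)⟧)⟦(1:ℤ)⟧ ≅ C₀ :=
      (shiftFunctorCompIsoId D (-1:ℤ) (1:ℤ) (by norm_num)).app C₀ with he
    refine ⟨a⟦(1:ℤ)⟧, b, ⟨?_, ?_⟩, ⟨?_, hb⟩, ?_⟩
    · -- a⟦1⟧⟦-1⟧ ∈ A
      exact hAiso ((shiftFunctorCompIsoId D (1:ℤ) (-1:ℤ) (by norm_num)).app a) ha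
    · -- a⟦1⟧ ∈ B : middle of the twice-rotated triangle (b, a⟦1⟧, C₀⟦-1⟧⟦1⟧)
      exact hBext (Triangle.mk f g h).rotate.rotate
        (rot_of_distTriang _ (rot_of_distTriang _ hdt)) hb (hBiso e hCB)
    · -- b⟦-1⟧ ∈ A : middle of (C₀⟦-1⟧⟦-1⟧, b⟦-1⟧, a)
      refine hAext (Triangle.mk f g h).invRotate.invRotate
        (inv_rot_of_distTriang _ (inv_rot_of_distTriang _ hdt)) ?_ ha
      exact hAiso (((shiftFunctorAdd' D (-1:ℤ) (-1:ℤ) (-2:ℤ) (by norm_num)).app C₀).symm) hCA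
    · -- the triangle a⟦1⟧ → C₀ → b⟦1⟧ → a⟦1⟧⟦1⟧
      set T3 := (Triangle.mk f g h).rotate.rotate.rotate with hT3
      have hT3d : T3 ∈ distTriang D :=
        rot_of_distTriang _ (rot_of_distTriang _ (rot_of_distTriang _ hdt))
      refine ⟨T3.mor₁ ≫ e.hom, e.inv ≫ T3.mor₂, T3.mor₃, ?_⟩
      refine isomorphic_distinguished _ hT3d _ ?_
      refine Triangle.isoMk _ _ (Iso.refl _) e.symm (Iso.refl _) ?_ ?_ ?_
      · exact (Category.assoc _ _ _).trans ((congrArg _ e.hom_inv_id).trans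
          ((Category.comp_id _).trans (Category.id_comp _).symm))
      · exact Category.comp_id _
      · exact (congrArg _ (CategoryTheory.Functor.map_id _ _)).trans
          ((Category.comp_id _).trans (Category.id_comp _).symm)
  · rintro ⟨S₀, S₁, ⟨hS₀A, hS₀B⟩, ⟨hS₁A, hS₁B⟩, f, g, h, hdt⟩
    constructor
    · -- C₀⟦-2⟧ ∈ A via six inverse rotations
      set T6 := (Triangle.mk f g h).invRotate.invRotate.invRotate.invRotate.invRotate.invRotate
        with hT6
      have hT6d : T6 ∈ distTriang D := by
        exact inv_rot_of_distTriang _ (inv_rot_of_distTriang _ (inv_rot_of_distTriang _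
          (inv_rot_of_distTriang _ (inv_rot_of_distTriang _ (inv_rot_of_distTriang _ hdt)))))
      have hmid : (C₀⟦(-1:ℤ)⟧)⟦(-1:ℤ)⟧ ∈ A := by
        refine hAext T6 hT6d ?_ ?_
        · exact hAdown _ hS₀A
        · exact hAiso ((shiftFunctor D (-1:ℤ)).mapIso
            ((shiftFunctorCompIsoId D (1:ℤ) (-1:ℤ) (by norm_num)).app S₁)) hS₁A
      exact hAiso ((shiftFunctorAdd' D (-1:ℤ) (-1:ℤ) (-2:ℤ) (by norm_num)).app C₀) hmid
    · exact hBext (Triangle.mk f g h) hdt hS₀B (hshift S₁ hS₁B)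
end

section
/- Let D be a Krull–Schmidt triangulated category and let X →^f Y →^g Z → ΣX be a triangle. Then (every endomorphism h : Y → Y with h ∘ f = f is an isomorphism) holds if and only if (for every s : Z → Y, 1_Y − s ∘ g is an isomorphism); that is, f is left minimal if and only if g is radical. -/
open CategoryTheory CategoryTheory.Pretriangulated CategoryTheory.Limits

universe v u

/-- In a Krull–Schmidt triangulated category, given a triangle
`X → Y → Z → ΣX`, the morphism `f : X ⟶ Y` is left minimal (every `h : Y ⟶ Y` with
`h ∘ f = f` is an isomorphism) if and only if `g : Y ⟶ Z` is radical (for every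
`s : Z ⟶ Y`, `1_Y − s ∘ g` is an isomorphism). -/
theorem left_minimal_iff_radical
    {D : Type u} [Category.{v} D] [HasZeroObject D] [HasShift D ℤ] [Preadditive D]
    [∀ n : ℤ, (shiftFunctor D n).Additive] [Pretriangulated D] [HasFiniteBiproducts D]
    (hKS : ∀ X : D, ∃ (n : ℕ) (c : Fin n → D),
      (∀ i, IsLocalRing (End (c i))) ∧ Nonempty (X ≅ ⨁ c))
    {X Y Z : D} (f : X ⟶ Y) (g : Y ⟶ Z) (h : Z ⟶ X⟦(1:ℤ)⟧)
    (hdist : Triangle.mk f g h ∈ distTriang D) :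
    (∀ e : Y ⟶ Y, f ≫ e = f → IsIso e) ↔
    (∀ s : Z ⟶ Y, IsIso (𝟙 Y - g ≫ s)) := by
  have hfg : f ≫ g = 0 := comp_distTriang_mor_zero₁₂ _ hdist
  constructor
  · intro H s
    exact H _ (by simp [Preadditive.comp_sub, reassoc_of% hfg])
  · intro H e he
    have h0 : f ≫ (𝟙 Y - e) = 0 := by simp [Preadditive.comp_sub, he]
    obtain ⟨s, hs⟩ := Triangle.yoneda_exact₂ _ hdist (𝟙 Y - e) h0
    have : e = 𝟙 Y - g ≫ s := by
      have hs' : 𝟙 Y - e = g ≫ (s : Z ⟶ Y) := hs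
      rw [← hs']; abel
    rw [this]
    exact H s
end

section
/- Let D be a triangulated category with shift Σ and let T be a rigid full additive subcategory (Hom_D(T, ΣT) = 0). Let T₁ → T₀ → A →^w Σ T₁ be a triangle with T₀, T₁ ∈ T. Then for every object C of D, the connecting map induces an isomorphism Hom_D(C, Σ⁻¹A) / [Σ⁻¹T](C, Σ⁻¹A) ≅ ker( Hom_D(C, T₁) → Hom_D(C, T₀) ), where [Σ⁻¹T](C, Σ⁻¹A) is the subgroup of morphisms C → Σ⁻¹A factoring through an object of Σ⁻¹T. -/
open CategoryTheory CategoryTheory.Pretriangulated CategoryTheory.Limits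

universe v u

/-- Let `T` be a rigid full additive subcategory of a triangulated
category and `T₁ → T₀ → A → ΣT₁` a triangle with `T₀, T₁ ∈ T`. For every object `C`,
postcomposition with the rotated connecting morphism `ψ : Σ⁻¹A ⟶ T₁` induces an
isomorphism `Hom(C, Σ⁻¹A)/[Σ⁻¹T](C, Σ⁻¹A) ≅ ker(Hom(C, T₁) → Hom(C, T₀))`:
its image is the kernel of postcomposition with `T₁ ⟶ T₀`, and its kernel consists of
the morphisms factoring through an object of `Σ⁻¹T`. -/
theorem negative_first_extension_computation
    {D : Type u} [Category.{v} D] [HasZeroObject D] [HasShift D ℤ] [Preadditive D]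
    [∀ n : ℤ, (shiftFunctor D n).Additive] [Pretriangulated D]
    (T : Set D)
    (hrigid : ∀ T' ∈ T, ∀ T'' ∈ T, ∀ φ : T' ⟶ T''⟦(1:ℤ)⟧, φ = 0)
    {T₁ T₀ A : D} (a : T₁ ⟶ T₀) (b : T₀ ⟶ A) (w : A ⟶ T₁⟦(1:ℤ)⟧)
    (hdist : Triangle.mk a b w ∈ distTriang D)
    (hT₀ : T₀ ∈ T) (hT₁ : T₁ ∈ T) :
    ∀ (C : D) (ψ : A⟦(-1:ℤ)⟧ ⟶ T₁),
      ψ = (shiftFunctor D (-1:ℤ)).map w ≫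
          (shiftFunctorCompIsoId D (1:ℤ) (-1:ℤ) (by omega)).hom.app T₁ →
      (∀ y : C ⟶ T₁, y ≫ a = 0 ↔ ∃ x : C ⟶ A⟦(-1:ℤ)⟧, x ≫ ψ = y) ∧
      (∀ x : C ⟶ A⟦(-1:ℤ)⟧, x ≫ ψ = 0 ↔
        ∃ T' ∈ T, ∃ (u : C ⟶ T'⟦(-1:ℤ)⟧) (v : T'⟦(-1:ℤ)⟧ ⟶ A⟦(-1:ℤ)⟧), u ≫ v = x) := by
  intro C ψ hψ
  -- the inverse rotation of the given triangle
  have hdist' := inv_rot_of_distTriang _ hdist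
  have hmor₁ : (Triangle.mk a b w).invRotate.mor₁ = -ψ := by
    subst hψ
    simp [Triangle.invRotate]
    rfl
  constructor
  · intro y
    constructor
    · intro hy
      obtain ⟨g, hg⟩ := Triangle.coyoneda_exact₂ _ hdist' y hy
      refine ⟨-g, ?_⟩
      rw [hg, hmor₁]
      exact (Preadditive.neg_comp _ _).trans (Preadditive.comp_neg _ _).symm
    · rintro ⟨x, rfl⟩
      have h12 := comp_distTriang_mor_zero₁₂ _ hdist'
      rw [hmor₁] at h12
      have : ψ ≫ a = 0 := by
        exact neg_eq_zero.mp ((Preadditive.neg_comp ψ a).symm.trans h12)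
      rw [Category.assoc, this, comp_zero]
  · intro x
    constructor
    · intro hx
      have hdist'' := inv_rot_of_distTriang _ hdist'
      have hx' : x ≫ (Triangle.mk a b w).invRotate.invRotate.mor₂ = 0 := by
        have : (Triangle.mk a b w).invRotate.invRotate.mor₂ =
            (Triangle.mk a b w).invRotate.mor₁ := rfl
        rw [this, hmor₁]
        exact (Preadditive.comp_neg x ψ).trans (by rw [hx]; exact neg_zero)
      obtain ⟨g, hg⟩ := Triangle.coyoneda_exact₂ _ hdist'' x hx'
      exact ⟨T₀, hT₀, g, _, hg.symm⟩
    · rintro ⟨T', hT', u, v, rfl⟩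
      have hφ : v ≫ ψ = 0 := by
        have h0 : (shiftFunctorCompIsoId D (-1:ℤ) (1:ℤ) (by omega)).inv.app T' ≫
            (v ≫ ψ)⟦(1:ℤ)⟧' = 0 := hrigid T' hT' T₁ hT₁ _
        have h1 : (v ≫ ψ)⟦(1:ℤ)⟧' = 0 := by
          calc (v ≫ ψ)⟦(1:ℤ)⟧'
              = (shiftFunctorCompIsoId D (-1:ℤ) (1:ℤ) (by omega)).hom.app T' ≫
                ((shiftFunctorCompIsoId D (-1:ℤ) (1:ℤ) (by omega)).inv.app T' ≫
                  (v ≫ ψ)⟦(1:ℤ)⟧') := by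
                rw [Iso.hom_inv_id_app_assoc]
            _ = 0 := by rw [h0, comp_zero]
        apply (shiftFunctor D (1:ℤ)).map_injective
        rw [h1, Functor.map_zero]
      rw [Category.assoc, hφ, comp_zero]
end
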